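/- For m ≥ 1 let G_m ⊆ U(2) be the matrix group generated by X = [[0,1],[1,0]] and Z^{1/m} = diag(1, ω_{2m}) where ω_{2m} = e^{2πi/(2m)}. Then the controlled-Z gate CZ = diag(1,1,1,-1) ∈ U(4) satisfies CZ (G_m ⊗ G_m) CZ† = G_m ⊗ G_m, CZ is entangling, and hence G_m is an entangling group for every m ∈ ℕ. -/

import Mathlib

open Matrix Kronecker

/-- The tensor (Kronecker) square of a set of matrices. -/
def tensorSet (S : Set (Matrix (Fin 2) (Fin 2) ℂ)) :
    Set (Matrix (Fin 2 × Fin 2) (Fin 2 × Fin 2) ℂ) :=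
  {x | ∃ a ∈ S, ∃ b ∈ S, x = a ⊗ₖ b}

/-- The SWAP operation on ℂ² ⊗ ℂ², as a matrix. -/
def swapMat : Matrix (Fin 2 × Fin 2) (Fin 2 × Fin 2) ℂ :=
  fun p q => if p.1 = q.2 ∧ p.2 = q.1 then 1 else 0

/-- A two-qubit unitary `V` is entangling if it is neither of the form `A ⊗ B`
nor `SWAP · (A ⊗ B)` for unitaries `A, B`. -/
def Entangling (V : Matrix (Fin 2 × Fin 2) (Fin 2 × Fin 2) ℂ) : Prop :=
  ∀ A B : Matrix (Fin 2) (Fin 2) ℂ,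
    A ∈ Matrix.unitaryGroup (Fin 2) ℂ → B ∈ Matrix.unitaryGroup (Fin 2) ℂ →
      V ≠ A ⊗ₖ B ∧ V ≠ swapMat * (A ⊗ₖ B)

/-- `N` is a projective normaliser of the set of matrices `S`. -/
def ProjNorm {m : Type*} [Fintype m] (N : Matrix m m ℂ) (S : Set (Matrix m m ℂ)) : Prop :=
  ∀ g ∈ S, ∃ g' ∈ S, ∃ c : ℂ, ‖c‖ = 1 ∧ N * g * Nᴴ = c • g'

/-- The controlled-Z gate diag(1,1,1,-1). -/
def CZgate : Matrix (Fin 2 × Fin 2) (Fin 2 × Fin 2) ℂ :=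
  fun p q => if p = q then (if p.1 = 1 ∧ p.2 = 1 then -1 else 1) else 0

/-!
Every element of `G_m` is diagonal or antidiagonal, since both generators are. Conjugating
`a ⊗ b` by `CZ = diag(1,1,1,-1)` only flips signs of entries, and for such `a`, `b` the result is
again a tensor product: `a ⊗ b`, `a ⊗ Zb`, `Za ⊗ b` or `-Za ⊗ Zb` according to the shapes of
`a` and `b`. These lie in `G_m ⊗ G_m` because `Z = (Z^{1/m})^m` and `-1 = (ZX)^2` lie in `G_m`.
Since `CZ` is a self-adjoint involution, conjugation maps `G_m ⊗ G_m` onto itself. Finally `CZ`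
is not a product `A ⊗ B`, as its diagonal `1, 1, 1, -1` is not of the form
`(a₀b₀, a₀b₁, a₁b₀, a₁b₁)`; nor is it `SWAP · (A ⊗ B)`, whose entry `a₁b₀` at `(01, 10)` would
vanish although `a₀b₀ = 1` and `a₁b₁ = -1` (with `aᵢ = A i i`, `bⱼ = B j j`).
-/

open Matrix Kronecker Set

theorem Function.Involutive.image_eq_of_mapsTo {α : Type*} {f : α → α} (hf : f.Involutive)
    {s : Set α} (h : MapsTo f s s) : f '' s = s :=
  h.image_subset.antisymm fun x hx => ⟨f x, h hx, hf x⟩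

theorem projNorm_of_mapsTo {n : Type*} [Fintype n] {N : Matrix n n ℂ} {S : Set (Matrix n n ℂ)}
    (h : MapsTo (fun g => N * g * Nᴴ) S S) : ProjNorm N S :=
  fun _ hg => ⟨_, h hg, 1, norm_one, (one_smul ℂ _).symm⟩

theorem Complex.exp_two_pi_I_div_two_mul_pow_self {m : ℕ} (hm : m ≠ 0) :
    Complex.exp (2 * Real.pi * Complex.I / (2 * m)) ^ m = -1 := by
  rw [← Complex.exp_nat_mul]
  have hm' : (m : ℂ) ≠ 0 := Nat.cast_ne_zero.mpr hm
  have : (m : ℂ) * (2 * Real.pi * Complex.I / (2 * m)) = Real.pi * Complex.I := by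
    field_simp
  rw [this, Complex.exp_pi_mul_I]

section TwoByTwo

variable {R : Type*}

def IsAntidiag [Zero R] (A : Matrix (Fin 2) (Fin 2) R) : Prop := ∀ i, A i i = 0

theorem isDiag_fin_two_iff [Zero R] {A : Matrix (Fin 2) (Fin 2) R} :
    A.IsDiag ↔ A 0 1 = 0 ∧ A 1 0 = 0 := by
  refine ⟨fun h => ⟨h (by decide), h (by decide)⟩, fun h i j hij => ?_⟩
  fin_cases i <;> fin_cases j <;> simp_all

theorem isAntidiag_fin_two_iff [Zero R] {A : Matrix (Fin 2) (Fin 2) R} :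
    IsAntidiag A ↔ A 0 0 = 0 ∧ A 1 1 = 0 :=
  Fin.forall_fin_two

theorem isDiag_or_isAntidiag_mul [Semiring R] {A B : Matrix (Fin 2) (Fin 2) R}
    (hA : A.IsDiag ∨ IsAntidiag A) (hB : B.IsDiag ∨ IsAntidiag B) :
    (A * B).IsDiag ∨ IsAntidiag (A * B) := by
  simp only [isDiag_fin_two_iff, isAntidiag_fin_two_iff] at hA hB ⊢
  rcases hA with hA | hA <;> rcases hB with hB | hB <;>
    simp [mul_apply, Fin.sum_univ_two, hA.1, hA.2, hB.1, hB.2]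

theorem isDiag_or_isAntidiag_of_mem_closure [Semiring R] {S : Set (Matrix (Fin 2) (Fin 2) R)}
    (hS : ∀ a ∈ S, a.IsDiag ∨ IsAntidiag a) {a : Matrix (Fin 2) (Fin 2) R}
    (ha : a ∈ Submonoid.closure S) : a.IsDiag ∨ IsAntidiag a := by
  induction ha using Submonoid.closure_induction with
  | mem x hx => exact hS x hx
  | one => exact Or.inl isDiag_one
  | mul x y _ _ hx hy => exact isDiag_or_isAntidiag_mul hx hy

theorem fin_two_diag_pow [Semiring R] (a d : R) (n : ℕ) :
    !![a, 0; 0, d] ^ n = !![a ^ n, 0; 0, d ^ n] := by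
  rw [← diagonal_vec2, diagonal_pow, ← diagonal_vec2]
  congr 1
  ext i
  fin_cases i <;> simp

end TwoByTwo

def pauliZ : Matrix (Fin 2) (Fin 2) ℂ := diagonal ![1, -1]

theorem pauliZ_mul_pauliX_mul_self :
    pauliZ * !![0, 1; 1, 0] * (pauliZ * !![0, 1; 1, 0]) = -1 := by
  simp [pauliZ, diagonal_vec2, one_fin_two, neg_of]

section CZ

def czSign (p : Fin 2 × Fin 2) : ℂ := if p.1 = 1 ∧ p.2 = 1 then -1 else 1

theorem star_czSign (p : Fin 2 × Fin 2) : star (czSign p) = czSign p := by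
  unfold czSign; split_ifs <;> simp

theorem czSign_mul_self (p : Fin 2 × Fin 2) : czSign p * czSign p = 1 := by
  unfold czSign; split_ifs <;> simp

theorem CZgate_eq_diagonal : CZgate = diagonal czSign := by
  ext p q
  simp [CZgate, czSign, diagonal_apply]

theorem CZgate_conjTranspose : CZgateᴴ = CZgate := by
  rw [CZgate_eq_diagonal, diagonal_conjTranspose]
  exact congrArg diagonal (funext star_czSign)

theorem CZgate_mul_self : CZgate * CZgate = 1 := by
  rw [CZgate_eq_diagonal, diagonal_mul_diagonal, ← diagonal_one]
  exact congrArg diagonal (funext czSign_mul_self)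

theorem CZgate_mem_unitaryGroup : CZgate ∈ unitaryGroup (Fin 2 × Fin 2) ℂ := by
  rw [mem_unitaryGroup_iff, star_eq_conjTranspose, CZgate_conjTranspose, CZgate_mul_self]

theorem CZgate_conj_involutive : Function.Involutive fun g => CZgate * g * CZgateᴴ := by
  intro g
  simp only [CZgate_conjTranspose, ← Matrix.mul_assoc, CZgate_mul_self, Matrix.one_mul]
  rw [Matrix.mul_assoc, CZgate_mul_self, Matrix.mul_one]

theorem CZgate_conj_apply (M : Matrix (Fin 2 × Fin 2) (Fin 2 × Fin 2) ℂ) (p q : Fin 2 × Fin 2) :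
    (CZgate * M * CZgateᴴ) p q = czSign p * M p q * czSign q := by
  rw [CZgate_conjTranspose, CZgate_eq_diagonal, mul_diagonal, diagonal_mul]

theorem CZgate_conj_kronecker_of_isDiag_of_isDiag {a b : Matrix (Fin 2) (Fin 2) ℂ}
    (ha : a.IsDiag) (hb : b.IsDiag) : CZgate * (a ⊗ₖ b) * CZgateᴴ = a ⊗ₖ b := by
  rw [isDiag_fin_two_iff] at ha hb
  ext ⟨i, j⟩ ⟨k, l⟩
  rw [CZgate_conj_apply]
  fin_cases i <;> fin_cases j <;> fin_cases k <;> fin_cases l <;>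
    simp [czSign, ha.1, ha.2, hb.1, hb.2]

theorem CZgate_conj_kronecker_of_isAntidiag_of_isDiag {a b : Matrix (Fin 2) (Fin 2) ℂ}
    (ha : IsAntidiag a) (hb : b.IsDiag) : CZgate * (a ⊗ₖ b) * CZgateᴴ = a ⊗ₖ (pauliZ * b) := by
  rw [isAntidiag_fin_two_iff] at ha
  rw [isDiag_fin_two_iff] at hb
  ext ⟨i, j⟩ ⟨k, l⟩
  rw [CZgate_conj_apply]
  fin_cases i <;> fin_cases j <;> fin_cases k <;> fin_cases l <;>
    simp [czSign, pauliZ, ha.1, ha.2, hb.1, hb.2]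

theorem CZgate_conj_kronecker_of_isDiag_of_isAntidiag {a b : Matrix (Fin 2) (Fin 2) ℂ}
    (ha : a.IsDiag) (hb : IsAntidiag b) : CZgate * (a ⊗ₖ b) * CZgateᴴ = (pauliZ * a) ⊗ₖ b := by
  rw [isDiag_fin_two_iff] at ha
  rw [isAntidiag_fin_two_iff] at hb
  ext ⟨i, j⟩ ⟨k, l⟩
  rw [CZgate_conj_apply]
  fin_cases i <;> fin_cases j <;> fin_cases k <;> fin_cases l <;>
    simp [czSign, pauliZ, ha.1, ha.2, hb.1, hb.2]

theorem CZgate_conj_kronecker_of_isAntidiag_of_isAntidiag {a b : Matrix (Fin 2) (Fin 2) ℂ}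
    (ha : IsAntidiag a) (hb : IsAntidiag b) :
    CZgate * (a ⊗ₖ b) * CZgateᴴ = (-(pauliZ * a)) ⊗ₖ (pauliZ * b) := by
  rw [isAntidiag_fin_two_iff] at ha hb
  ext ⟨i, j⟩ ⟨k, l⟩
  rw [CZgate_conj_apply]
  fin_cases i <;> fin_cases j <;> fin_cases k <;> fin_cases l <;>
    simp [czSign, pauliZ, ha.1, ha.2, hb.1, hb.2]

theorem CZgate_conj_mapsTo_tensorSet {S : Submonoid (Matrix (Fin 2) (Fin 2) ℂ)}
    (hZ : pauliZ ∈ S) (hneg : -1 ∈ S) (hS : ∀ a ∈ S, a.IsDiag ∨ IsAntidiag a) :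
    MapsTo (fun g => CZgate * g * CZgateᴴ) (tensorSet S) (tensorSet S) := by
  rintro _ ⟨a, ha, b, hb, rfl⟩
  rcases hS a ha with ha' | ha' <;> rcases hS b hb with hb' | hb'
  · exact ⟨a, ha, b, hb, CZgate_conj_kronecker_of_isDiag_of_isDiag ha' hb'⟩
  · exact ⟨_, mul_mem hZ ha, b, hb, CZgate_conj_kronecker_of_isDiag_of_isAntidiag ha' hb'⟩
  · exact ⟨a, ha, _, mul_mem hZ hb, CZgate_conj_kronecker_of_isAntidiag_of_isDiag ha' hb'⟩
  · refine ⟨_, ?_, _, mul_mem hZ hb, CZgate_conj_kronecker_of_isAntidiag_of_isAntidiag ha' hb'⟩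
    rw [← neg_one_mul]
    exact mul_mem hneg (mul_mem hZ ha)

theorem CZgate_ne_kronecker (A B : Matrix (Fin 2) (Fin 2) ℂ) : CZgate ≠ A ⊗ₖ B := by
  intro h
  have e : ∀ i j, CZgate (i, j) (i, j) = A i i * B j j := fun i j => by rw [h]; rfl
  have := calc
    (1 : ℂ) = CZgate (0, 1) (0, 1) * CZgate (1, 0) (1, 0) := by simp [CZgate]
    _ = CZgate (0, 0) (0, 0) * CZgate (1, 1) (1, 1) := by simp only [e]; ring
    _ = -1 := by simp [CZgate]
  norm_num at this

theorem swapMat_mul_apply (M : Matrix (Fin 2 × Fin 2) (Fin 2 × Fin 2) ℂ) (p q : Fin 2 × Fin 2) :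
    (swapMat * M) p q = M p.swap q := by
  obtain ⟨i, j⟩ := p
  fin_cases i <;> fin_cases j <;>
    simp [swapMat, mul_apply, Fintype.sum_prod_type, Fin.sum_univ_two]

theorem CZgate_ne_swapMat_mul_kronecker (A B : Matrix (Fin 2) (Fin 2) ℂ) :
    CZgate ≠ swapMat * (A ⊗ₖ B) := by
  intro h
  have e : ∀ p q, CZgate p q = A p.2 q.1 * B p.1 q.2 := fun p q => by
    rw [h, swapMat_mul_apply]; rfl
  have h00 : A 0 0 * B 0 0 = 1 := by simpa [CZgate] using (e (0, 0) (0, 0)).symm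
  have h11 : A 1 1 * B 1 1 = -1 := by simpa [CZgate] using (e (1, 1) (1, 1)).symm
  have h01 : A 1 1 * B 0 0 = 0 := by simpa [CZgate] using (e (0, 1) (1, 0)).symm
  rcases mul_eq_zero.mp h01 with h0 | h0
  · simp [h0] at h11
  · simp [h0] at h00

theorem CZgate_entangling : Entangling CZgate :=
  fun A B _ _ => ⟨CZgate_ne_kronecker A B, CZgate_ne_swapMat_mul_kronecker A B⟩

end CZ

/-- For m ≥ 1 let G_m ⊆ U(2) be the matrix group generated by
X = [[0,1],[1,0]] and Z^{1/m} = diag(1, ω_{2m}).  Then the controlled-Z gate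
CZ = diag(1,1,1,-1) satisfies CZ (G_m⊗G_m) CZ† = G_m⊗G_m, CZ is entangling, and hence
G_m is an entangling group for every m ∈ ℕ. -/
theorem stmt_16 (m : ℕ) (hm : 1 ≤ m)
    (ω : ℂ) (hω : ω = Complex.exp (2 * Real.pi * Complex.I / (2 * m)))
    (X Zm : Matrix (Fin 2) (Fin 2) ℂ)
    (hX : X = !![0, 1; 1, 0]) (hZm : Zm = !![1, 0; 0, ω])
    (Gm : Set (Matrix (Fin 2) (Fin 2) ℂ))
    (hGm : Gm = (Submonoid.closure {X, Zm} : Submonoid (Matrix (Fin 2) (Fin 2) ℂ))) :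
    (fun g => CZgate * g * CZgateᴴ) '' tensorSet Gm = tensorSet Gm ∧
    CZgate ∈ Matrix.unitaryGroup (Fin 2 × Fin 2) ℂ ∧
    Entangling CZgate ∧
    (∃ N : Matrix (Fin 2 × Fin 2) (Fin 2 × Fin 2) ℂ,
      N ∈ Matrix.unitaryGroup (Fin 2 × Fin 2) ℂ ∧
      ProjNorm N (tensorSet Gm) ∧ Entangling N) := by
  subst hGm
  set S := Submonoid.closure {X, Zm}
  have hX_mem : X ∈ S := Submonoid.subset_closure (by simp)
  have hZm_mem : Zm ∈ S := Submonoid.subset_closure (by simp)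
  have hZ : pauliZ ∈ S := by
    have : Zm ^ m = pauliZ := by
      rw [hZm, fin_two_diag_pow, one_pow, hω,
        Complex.exp_two_pi_I_div_two_mul_pow_self (by omega), pauliZ, diagonal_vec2]
    exact this ▸ pow_mem hZm_mem m
  have hneg : -1 ∈ S := by
    rw [← pauliZ_mul_pauliX_mul_self, ← hX]
    exact mul_mem (mul_mem hZ hX_mem) (mul_mem hZ hX_mem)
  have hS : ∀ a ∈ S, a.IsDiag ∨ IsAntidiag a := by
    refine fun a ha => isDiag_or_isAntidiag_of_mem_closure ?_ ha
    rintro _ (rfl | rfl)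
    · exact Or.inr (isAntidiag_fin_two_iff.mpr (by simp [hX]))
    · exact Or.inl (isDiag_fin_two_iff.mpr (by simp [hZm]))
  have hmaps := CZgate_conj_mapsTo_tensorSet hZ hneg hS
  exact ⟨CZgate_conj_involutive.image_eq_of_mapsTo hmaps, CZgate_mem_unitaryGroup,
    CZgate_entangling, CZgate, CZgate_mem_unitaryGroup, projNorm_of_mapsTo hmaps,
    CZgate_entangling⟩
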